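/- arXiv:2307.00098 — 6 statements merged into one kernel-verified Lean document; each statement's English description precedes it below -/
import Mathlib

section
/- For a formal power series g(x) over a commutative ring and scalars r, s, the r-th binomial transform commutes with the s-INVERT transform: applying g ↦ (1/(1-rx))·g(x/(1-rx)) and then g ↦ g/(1 - s·x·g) gives the same result as applying them in the opposite order. -/
/-! Substituting `u = X/(1 - rX)` is a `K`-algebra endomorphism `φ` of `K⟦X⟧`, and
`binomT r = (1 - rX)⁻¹ · φ`. Being a ring map, `φ` sends `invertT s g` to
`φ g / (1 - s·u·φ g)`; since `u·φ g = X·((1 - rX)⁻¹ φ g)`, multiplying by `(1 - rX)⁻¹`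
gives exactly `invertT s (binomT r g)`. -/

open PowerSeries

/-- Composition (substitution) of formal power series, meaningful when the
second argument has zero constant term. -/
noncomputable def psComp {K : Type*} [Field K] (f g : K⟦X⟧) : K⟦X⟧ :=
  PowerSeries.mk fun n => ∑ k ∈ Finset.range (n + 1), coeff k f * coeff n (g ^ k)

/-- The `r`-th binomial transform: `g(x) ↦ (1/(1-rx)) · g(x/(1-rx))`. -/
noncomputable def binomT {K : Type*} [Field K] (r : K) (g : K⟦X⟧) : K⟦X⟧ :=
  (1 - C r * X)⁻¹ * psComp g (X * (1 - C r * X)⁻¹)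

/-- The `s`-INVERT transform: `g(x) ↦ g(x)/(1 - s·x·g(x))`. -/
noncomputable def invertT {K : Type*} [Field K] (s : K) (g : K⟦X⟧) : K⟦X⟧ :=
  g * (1 - C s * X * g)⁻¹

lemma coeff_pow_eq_zero_of_lt {R : Type*} [CommSemiring R] {u : R⟦X⟧} (hu : constantCoeff u = 0)
    {n k : ℕ} (h : n < k) :
    coeff n (u ^ k) = 0 :=
  X_pow_dvd_iff.mp (pow_dvd_pow_of_dvd (X_dvd_iff.mpr hu) k) n h

section

variable {K : Type*} [Field K]

lemma psComp_eq_subst {u : K⟦X⟧} (hu : constantCoeff u = 0) (f : K⟦X⟧) :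
    psComp f u = f.subst u := by
  ext n
  rw [psComp, coeff_mk, coeff_subst' (HasSubst.of_constantCoeff_zero' hu)]
  refine (finsum_eq_sum_of_support_subset _ fun k hk => ?_).symm
  by_contra hkn
  rw [Finset.coe_range, Set.mem_Iio, not_lt] at hkn
  exact hk (by simp only [coeff_pow_eq_zero_of_lt hu hkn, mul_zero])

lemma map_inv_of_constantCoeff_ne_zero {L F : Type*} [Field L] [FunLike F K⟦X⟧ L⟦X⟧]
    [RingHomClass F K⟦X⟧ L⟦X⟧] (φ : F) {f : K⟦X⟧}
    (hf : constantCoeff f ≠ 0) : φ f⁻¹ = (φ f)⁻¹ := by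
  have hφf : constantCoeff (φ f) ≠ 0 :=
    (isUnit_iff_constantCoeff.mp ((isUnit_iff_constantCoeff.mpr hf.isUnit).map φ)).ne_zero
  rw [eq_inv_iff_mul_eq_one hφf, ← map_mul, PowerSeries.inv_mul_cancel f hf, map_one]

lemma map_invertT (φ : K⟦X⟧ →ₐ[K] K⟦X⟧) (s : K) (g : K⟦X⟧) :
    φ (invertT s g) = φ g * (1 - C s * φ X * φ g)⁻¹ := by
  have hunit : constantCoeff (1 - C s * X * g) ≠ 0 := by simp
  rw [invertT, map_mul, map_inv_of_constantCoeff_ne_zero φ hunit]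
  simp only [map_sub, map_one, map_mul, C_eq_algebraMap, AlgHom.commutes]

lemma binomT_eq_mul_substAlgHom (r : K) (g : K⟦X⟧) :
    binomT r g = (1 - C r * X)⁻¹ *
      substAlgHom (HasSubst.of_constantCoeff_zero' (a := X * (1 - C r * X)⁻¹) (by simp)) g := by
  rw [binomT, psComp_eq_subst (by simp), coe_substAlgHom]

end

theorem binomT_invertT_comm {K : Type*} [Field K] (r s : K) (g : K⟦X⟧) :
    binomT r (invertT s g) = invertT s (binomT r g) := by
  rw [binomT_eq_mul_substAlgHom, binomT_eq_mul_substAlgHom, map_invertT, substAlgHom_X, invertT]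
  simp only [mul_assoc]
end

section
/- Let g be a formal power series with constant term 1 satisfying the continued-fraction recursion g = 1/(1 − α₁x − β₁x²h) where h is another power series with constant term 1. Then g/(1 − s·x·g) = 1/(1 − (α₁+s)x − β₁x²h); i.e., the s-INVERT transform adds s to the first Jacobi coefficient α₁. -/
open PowerSeries

/-- The mean-INVERT transform: `g(x) ↦ g(x)/(1 - r·x²·g(x)²)`. -/
noncomputable def minvertT {K : Type*} [Field K] (r : K) (g : K⟦X⟧) : K⟦X⟧ :=
  g * (1 - C r * X ^ 2 * g ^ 2)⁻¹

theorem invertT_mul_eq_one_of_mul_eq_one {K : Type*} [Field K] (s : K) {g q : K⟦X⟧}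
    (hg : g * q = 1) : invertT s g * (q - C s * X) = 1 := by
  have hunit : constantCoeff (1 - C s * X * g) ≠ 0 := by simp
  calc invertT s g * (q - C s * X)
      = (1 - C s * X * g)⁻¹ * (g * q - C s * X * g) := by rw [invertT]; ring
    _ = 1 := by rw [hg, PowerSeries.inv_mul_cancel _ hunit]

theorem invertT_jacobi_general {K : Type*} [Field K] (α₁ β₁ s : K) (g h : K⟦X⟧)
    (hg : g * (1 - C α₁ * X - C β₁ * X ^ 2 * h) = 1) :
    invertT s g * (1 - C (α₁ + s) * X - C β₁ * X ^ 2 * h) = 1 := by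
  have hshift : 1 - C (α₁ + s) * X - C β₁ * X ^ 2 * h
      = (1 - C α₁ * X - C β₁ * X ^ 2 * h) - C s * X := by
    rw [map_add]; ring
  rw [hshift]
  exact invertT_mul_eq_one_of_mul_eq_one s hg

theorem invertT_jacobi {K : Type*} [Field K] (α₁ β₁ s : K) (g h : K⟦X⟧)
    (hg0 : constantCoeff g = 1) (hh0 : constantCoeff h = 1)
    (hg : g * (1 - C α₁ * X - C β₁ * X ^ 2 * h) = 1) :
    invertT s g * (1 - C (α₁ + s) * X - C β₁ * X ^ 2 * h) = 1 :=
  invertT_jacobi_general α₁ β₁ s g h hg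
end

section
/- Let g be the formal power series with constant term 1 satisfying g = 1/(1 − αx − βx²g) (constant-coefficient Jacobi continued fraction). Then the mean-INVERT transform MINVERT_r(g) = g/(1 − r·x²·g²) satisfies MINVERT_r(g) = 1/(1 − αx − (β+r)·x²·g); i.e., it adds r to the first β-coefficient of the continued fraction. -/
open PowerSeries

theorem constantCoeff_one_sub_C_mul_X_sq_mul {R : Type*} [CommRing R] (r : R) (f : R⟦X⟧) :
    constantCoeff (1 - C r * X ^ 2 * f) = 1 := by
  simp

theorem mul_one_sub_jacobi_add {R : Type*} [CommRing R] {α β : R} {g : R⟦X⟧}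
    (hg : g * (1 - C α * X - C β * X ^ 2 * g) = 1) (r : R) :
    g * (1 - C α * X - C (β + r) * X ^ 2 * g) = 1 - C r * X ^ 2 * g ^ 2 := by
  rw [map_add]
  linear_combination hg

theorem minvertT_jacobi_general {K : Type*} [Field K] (α β r : K) (g : K⟦X⟧)
    (hg : g * (1 - C α * X - C β * X ^ 2 * g) = 1) :
    minvertT r g * (1 - C α * X - C (β + r) * X ^ 2 * g) = 1 := by
  have hunit : constantCoeff (1 - C r * X ^ 2 * g ^ 2) ≠ 0 := by
    rw [constantCoeff_one_sub_C_mul_X_sq_mul]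
    exact one_ne_zero
  rw [minvertT, mul_right_comm, mul_one_sub_jacobi_add hg, PowerSeries.mul_inv_cancel _ hunit]

theorem minvertT_jacobi {K : Type*} [Field K] (α β r : K) (g : K⟦X⟧)
    (hg0 : constantCoeff g = 1)
    (hg : g * (1 - C α * X - C β * X ^ 2 * g) = 1) :
    minvertT r g * (1 - C α * X - C (β + r) * X ^ 2 * g) = 1 :=
  minvertT_jacobi_general α β r g hg
end

section
/- Let g = g_{α,β} satisfy g = 1/(1 − αx − βx²g) with g(0) = 1. Then the composite transform INVERT_{−a}(MINVERT_{p−q}(g_{a,q})) equals the free Meixner moment generating function m_{p,q,a}, i.e., the series M with M = 1/(1 − p·x²·G) where G satisfies G = 1/(1 − ax − q·x²·G). -/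
open PowerSeries

/-! Both transforms only divide by series with constant term `1`, so `INVERT_s ∘ MINVERT_r` collapses
to a single division `g / (1 - r x² g² - s x g)`. For `g = g_{a,q}` with `r = p - q`, `s = -a`,
the functional equation `g - a x g - q x² g² = 1` turns this denominator into `g (1 - p x² g)`. -/

namespace PowerSeries

variable {K : Type*} [Field K]

theorem mul_inv_mul_cancel_left {g : K⟦X⟧} (hg : constantCoeff g ≠ 0) (h : K⟦X⟧) :
    g * (g * h)⁻¹ = h⁻¹ := by
  rw [PowerSeries.mul_inv_rev, mul_left_comm, PowerSeries.mul_inv_cancel g hg, mul_one]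

theorem invertT_minvertT (s r : K) (g : K⟦X⟧) :
    invertT s (minvertT r g) = g * (1 - C r * X ^ 2 * g ^ 2 - C s * X * g)⁻¹ := by
  set A : K⟦X⟧ := 1 - C r * X ^ 2 * g ^ 2
  set B : K⟦X⟧ := A - C s * X * g
  have hA : constantCoeff A ≠ 0 := by simp [A]
  have hB : constantCoeff B ≠ 0 := by simp [B, A]
  have hA_inv := PowerSeries.mul_inv_cancel A hA
  have hden : 1 - C s * X * (g * A⁻¹) = B * A⁻¹ := by
    linear_combination -hA_inv
  have hden_inv : (B * A⁻¹)⁻¹ = A * B⁻¹ := by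
    rw [PowerSeries.inv_eq_iff_mul_eq_one (by simp [hA, hB])]
    linear_combination (B * B⁻¹) * hA_inv + PowerSeries.mul_inv_cancel B hB
  rw [invertT, minvertT, hden, hden_inv]
  linear_combination g * B⁻¹ * hA_inv

end PowerSeries

theorem free_meixner_transform_general {K : Type*} [Field K] (p q a : K) (G : K⟦X⟧)
    (hG : G * (1 - C a * X - C q * X ^ 2 * G) = 1) :
    invertT (-a) (minvertT (p - q) G) = (1 - C p * X ^ 2 * G)⁻¹ := by
  have hG0 : constantCoeff G ≠ 0 := by
    intro h
    simpa [h] using congrArg constantCoeff hG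
  have hden : 1 - C (p - q) * X ^ 2 * G ^ 2 - C (-a) * X * G = G * (1 - C p * X ^ 2 * G) := by
    rw [map_sub, map_neg]
    linear_combination -hG
  rw [invertT_minvertT, hden, mul_inv_mul_cancel_left hG0]

theorem free_meixner_transform {K : Type*} [Field K] (p q a : K) (G : K⟦X⟧)
    (hG0 : constantCoeff G = 1)
    (hG : G * (1 - C a * X - C q * X ^ 2 * G) = 1) :
    invertT (-a) (minvertT (p - q) G) = (1 - C p * X ^ 2 * G)⁻¹ :=
  free_meixner_transform_general p q a G hG
end

section
/- If a sequence aₙ has generating function given by the Jacobi continued fraction with constant coefficients α on the x-terms and β on the x²-terms (i.e., ∑aₙxⁿ = g where g = 1/(1 − αx − βx²g)), then the Hankel determinant hₙ = det(a_{i+j})_{0≤i,j≤n} equals β^{C(n+1,2)} = β^{n(n+1)/2}. -/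
/-!
Let `P i k = [X^i] g (X g)^k` be the Riordan array `(g, X g)` and `D = diag(β^k)`. The equation
`g = 1 + α X g + β X² g²` gives the three-term recurrence
`P (i+1) k = P i (k-1) + α P i k + β P i (k+1)`, whose tridiagonal matrix becomes symmetric after
multiplication by `D`. Hence `(P D Pᵀ) (i+1) j = (P D Pᵀ) i (j+1)`, so `P D Pᵀ` is a Hankel matrix,
and its first row is `(P D Pᵀ) 0 j = P j 0 = a_j`; that is, `P D Pᵀ = (a_{i+j})`. As `P` is lower
unitriangular, `h_n = det D = β^(0 + 1 + ⋯ + n)`.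
-/

open PowerSeries Finset Matrix

theorem prod_pow_val_eq_pow_choose_two {M : Type*} [CommMonoid M] (a : M) (n : ℕ) :
    ∏ k : Fin n, a ^ (k : ℕ) = a ^ n.choose 2 := by
  rw [Fin.prod_univ_eq_prod_range (a ^ ·), prod_pow_eq_pow_sum, sum_range_id, Nat.choose_two_right]

namespace HankelJacobi

section Table

variable {R : Type*} [Semiring R]

/-- For the Jacobi continued fraction `g`, this is the total weight of the Motzkin paths of
length `i` from height `0` to height `k`. -/
noncomputable def stieltjesTable (g : R⟦X⟧) (i k : ℕ) : R :=
  coeff i (g ^ (k + 1) * X ^ k)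

theorem stieltjesTable_eq_zero_of_lt (g : R⟦X⟧) {i k : ℕ} (h : i < k) :
    stieltjesTable g i k = 0 := by
  rw [stieltjesTable, coeff_mul_X_pow', if_neg (by omega)]

theorem stieltjesTable_self {g : R⟦X⟧} (hg : constantCoeff g = 1) (i : ℕ) :
    stieltjesTable g i i = 1 := by
  rw [stieltjesTable, coeff_mul_X_pow', if_pos le_rfl, Nat.sub_self,
    coeff_zero_eq_constantCoeff_apply, map_pow, hg, one_pow]

theorem stieltjesTable_zero_right (g : R⟦X⟧) (i : ℕ) : stieltjesTable g i 0 = coeff i g := by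
  simp [stieltjesTable]

end Table

variable {R : Type*} [CommRing R] {α β : R} {g : R⟦X⟧}

section Recurrence

variable (hg : g * (1 - C α * X - C β * X ^ 2 * g) = 1)
include hg

theorem constantCoeff_eq_one : constantCoeff g = 1 := by
  simpa using congrArg constantCoeff hg

theorem pow_succ_mul_X_pow_eq (k : ℕ) :
    g ^ (k + 1) * X ^ k
      = g ^ k * X ^ k + X * (C α * (g ^ (k + 1) * X ^ k) + C β * (g ^ (k + 2) * X ^ (k + 1))) := by
  linear_combination (g ^ k * X ^ k) * hg

theorem stieltjesTable_succ (i k : ℕ) :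
    stieltjesTable g (i + 1) k = coeff (i + 1) (g ^ k * X ^ k)
      + α * stieltjesTable g i k + β * stieltjesTable g i (k + 1) := by
  rw [stieltjesTable, pow_succ_mul_X_pow_eq hg, map_add, coeff_succ_X_mul, map_add, coeff_C_mul,
    coeff_C_mul, add_assoc]
  rfl

theorem stieltjesTable_succ_zero (i : ℕ) :
    stieltjesTable g (i + 1) 0 = α * stieltjesTable g i 0 + β * stieltjesTable g i 1 := by
  simp [stieltjesTable_succ hg, coeff_one]

theorem stieltjesTable_succ_succ (i k : ℕ) :
    stieltjesTable g (i + 1) (k + 1) = stieltjesTable g i k + α * stieltjesTable g i (k + 1)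
      + β * stieltjesTable g i (k + 2) := by
  rw [stieltjesTable_succ hg, show g ^ (k + 1) * X ^ (k + 1) = X * (g ^ (k + 1) * X ^ k) by ring,
    coeff_succ_X_mul]
  rfl

end Recurrence

section Pairing

noncomputable def pairing (g : R⟦X⟧) (β : R) (N i j : ℕ) : R :=
  ∑ k ∈ range N, stieltjesTable g i k * β ^ k * stieltjesTable g j k

theorem pairing_comm (N i j : ℕ) : pairing g β N i j = pairing g β N j i :=
  sum_congr rfl fun _ _ => by ring

variable (hg : g * (1 - C α * X - C β * X ^ 2 * g) = 1)
include hg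

/-- The right-hand side is symmetric in `i` and `j`. -/
theorem pairing_succ_left {M i : ℕ} (hi : i ≤ M) (j : ℕ) :
    pairing g β (M + 1) (i + 1) j = α * pairing g β (M + 1) i j
      + ∑ k ∈ range M, stieltjesTable g i k * β ^ (k + 1) * stieltjesTable g j (k + 1)
      + ∑ k ∈ range M, stieltjesTable g j k * β ^ (k + 1) * stieltjesTable g i (k + 1) := by
  have hlast : ∑ k ∈ range M, stieltjesTable g j k * β ^ (k + 1) * stieltjesTable g i (k + 1)
      = ∑ k ∈ range (M + 1), stieltjesTable g j k * β ^ (k + 1) * stieltjesTable g i (k + 1) := by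
    rw [sum_range_succ, stieltjesTable_eq_zero_of_lt g (Nat.lt_succ_of_le hi), mul_zero, add_zero]
  rw [hlast]
  simp only [pairing, sum_range_succ', stieltjesTable_succ_zero hg, stieltjesTable_succ_succ hg,
    add_mul, mul_add, sum_add_distrib, mul_sum]
  ring_nf
  ac_rfl

theorem pairing_succ_left_eq {M i j : ℕ} (hi : i ≤ M) (hj : j ≤ M) :
    pairing g β (M + 1) (i + 1) j = pairing g β (M + 1) i (j + 1) := by
  rw [pairing_comm _ i, pairing_succ_left hg hi, pairing_succ_left hg hj, pairing_comm _ j i]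
  ring

theorem pairing_eq_coeff_of_add_le {M : ℕ} :
    ∀ {i j : ℕ}, i + j ≤ M → pairing g β (M + 1) i j = coeff (i + j) g
  | 0, j, _ => by
    rw [pairing, sum_range_succ', sum_eq_zero fun k _ => by
      rw [stieltjesTable_eq_zero_of_lt g k.succ_pos, zero_mul, zero_mul]]
    simp [stieltjesTable_self (constantCoeff_eq_one hg), stieltjesTable_zero_right]
  | i + 1, j, h => by
    rw [pairing_succ_left_eq hg (by omega) (by omega), pairing_eq_coeff_of_add_le (by omega),
      add_right_comm, add_assoc]

theorem pairing_eq_coeff {N i : ℕ} (hi : i < N) (j : ℕ) : pairing g β N i j = coeff (i + j) g := by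
  have hvanish : ∀ k ≥ i + 1, stieltjesTable g i k * β ^ k * stieltjesTable g j k = 0 :=
    fun k hk => by rw [stieltjesTable_eq_zero_of_lt g hk, zero_mul, zero_mul]
  rw [pairing, eventually_constant_sum hvanish hi,
    ← eventually_constant_sum hvanish (by omega : i + 1 ≤ i + j + 1)]
  exact pairing_eq_coeff_of_add_le hg le_rfl

end Pairing

noncomputable def stieltjesMatrix (g : R⟦X⟧) (n : ℕ) : Matrix (Fin n) (Fin n) R :=
  of fun i k => stieltjesTable g i k

theorem det_stieltjesMatrix (hg : constantCoeff g = 1) (n : ℕ) :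
    (stieltjesMatrix g n).det = 1 := by
  rw [det_of_isLowerTriangular (stieltjesMatrix g n) fun i k hik =>
    stieltjesTable_eq_zero_of_lt g (show (i : ℕ) < k from hik)]
  simp [stieltjesMatrix, stieltjesTable_self hg]

theorem hankel_eq_stieltjesMatrix_mul_diagonal_mul_transpose
    (hg : g * (1 - C α * X - C β * X ^ 2 * g) = 1) (n : ℕ) :
    (of fun i j : Fin n => coeff ((i : ℕ) + (j : ℕ)) g)
      = stieltjesMatrix g n * diagonal (fun k : Fin n => β ^ (k : ℕ)) * (stieltjesMatrix g n)ᵀ := by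
  ext i j
  rw [of_apply, ← pairing_eq_coeff hg i.isLt, pairing,
    ← Fin.sum_univ_eq_sum_range (fun k => stieltjesTable g i k * β ^ k * stieltjesTable g j k),
    mul_apply]
  simp only [mul_diagonal, transpose_apply]
  rfl

end HankelJacobi

open HankelJacobi

theorem hankel_jacobi_constant_general {K : Type*} [Field K] (α β : K) (g : K⟦X⟧)
    (hg : g * (1 - C α * X - C β * X ^ 2 * g) = 1) (n : ℕ) :
    Matrix.det (Matrix.of fun i j : Fin (n + 1) => coeff ((i : ℕ) + (j : ℕ)) g)
      = β ^ ((n + 1).choose 2) := by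
  rw [hankel_eq_stieltjesMatrix_mul_diagonal_mul_transpose hg, det_mul, det_mul, det_transpose,
    det_stieltjesMatrix (constantCoeff_eq_one hg), det_diagonal, prod_pow_val_eq_pow_choose_two,
    one_mul, mul_one]

theorem hankel_jacobi_constant {K : Type*} [Field K] (α β : K) (g : K⟦X⟧)
    (hg0 : constantCoeff g = 1)
    (hg : g * (1 - C α * X - C β * X ^ 2 * g) = 1) (n : ℕ) :
    Matrix.det (Matrix.of fun i j : Fin (n + 1) => coeff ((i : ℕ) + (j : ℕ)) g)
      = β ^ ((n + 1).choose 2) :=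
  hankel_jacobi_constant_general α β g hg n
end

section
/- The generating function of the spidernet S(a,b,c), defined as the Jacobi continued fraction g = 1/(1 − a·x²·G) with G = 1/(1 − (b−1−c)x − c·x²·G), satisfies the closed form: g·(a·√(x²(b² − 2b(c+1) + (c−1)²) − 2x(b−1−c) + 1) + ax(b−1−c) − a + 2c) = 2c, where the square root denotes the power series square root with constant term 1 of the quadratic polynomial. -/
/-!
Solving the quadratic equation `c x² G² − (1 − (b−1−c)x) G + 1 = 0` satisfied by `G` shows that
`T = 1 − (b−1−c)x − 2c x² G` squares to `P`. Since `T` also has constant term `1`, and a square root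
with a given nonzero constant term is unique when `2 ≠ 0`, we get `S = T`; substituting, the left-hand
factor becomes `2c (1 − a x² G)`, which cancels against `g`.
-/

open PowerSeries

namespace PowerSeries

theorem eq_of_sq_eq_of_constantCoeff_eq {R : Type*} [CommRing R] [IsDomain R] [NeZero (2 : R)]
    {f g : R⟦X⟧} (h : f ^ 2 = g ^ 2) (hc : constantCoeff f = constantCoeff g)
    (hf : constantCoeff f ≠ 0) : f = g := by
  refine (sq_eq_sq_iff_eq_or_eq_neg.mp h).resolve_right fun hneg => hf ?_
  have hcoeff : constantCoeff f = -constantCoeff g := by rw [hneg, map_neg]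
  have htwo : (2 : R) * constantCoeff f = 0 := by linear_combination hcoeff + hc
  exact (mul_eq_zero.mp htwo).resolve_left two_ne_zero

end PowerSeries

theorem sq_spidernet_root {R : Type*} [CommRing R] (b c : R) {G : R⟦X⟧}
    (hG : G * (1 - C (b - 1 - c) * X - C c * X ^ 2 * G) = 1) :
    (1 - C (b - 1 - c) * X - C (2 * c) * X ^ 2 * G) ^ 2
      = C (b ^ 2 - 2 * b * (c + 1) + (c - 1) ^ 2) * X ^ 2 - C (2 * (b - 1 - c)) * X + 1 := by
  simp only [map_sub, map_add, map_mul, map_pow, map_one, map_ofNat] at hG ⊢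
  linear_combination (-4 * C c * X ^ 2) * hG

theorem spidernet_closed_form_general {K : Type*} [Field K] [CharZero K] (a b c : K) (G S : K⟦X⟧)
    (hG : G * (1 - C (b - 1 - c) * X - C c * X ^ 2 * G) = 1)
    (hS0 : constantCoeff S = 1)
    (hS : S ^ 2 = C (b ^ 2 - 2 * b * (c + 1) + (c - 1) ^ 2) * X ^ 2
        - C (2 * (b - 1 - c)) * X + 1) :
    (1 - C a * X ^ 2 * G)⁻¹
        * (C a * S + C (a * (b - 1 - c)) * X - C a + C (2 * c))
      = C (2 * c) := by
  have hS_eq : S = 1 - C (b - 1 - c) * X - C (2 * c) * X ^ 2 * G :=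
    eq_of_sq_eq_of_constantCoeff_eq (hS.trans (sq_spidernet_root b c hG).symm)
      (by simp [hS0]) (by simp [hS0])
  have hfactor : C a * S + C (a * (b - 1 - c)) * X - C a + C (2 * c)
      = C (2 * c) * (1 - C a * X ^ 2 * G) := by
    rw [hS_eq]
    simp only [map_mul, map_sub, map_one]
    ring
  rw [hfactor, mul_left_comm, PowerSeries.inv_mul_cancel _ (by simp), mul_one]

theorem spidernet_closed_form {K : Type*} [Field K] [CharZero K] (a b c : K) (G S : K⟦X⟧)
    (hG0 : constantCoeff G = 1)
    (hG : G * (1 - C (b - 1 - c) * X - C c * X ^ 2 * G) = 1)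
    (hS0 : constantCoeff S = 1)
    (hS : S ^ 2 = C (b ^ 2 - 2 * b * (c + 1) + (c - 1) ^ 2) * X ^ 2
        - C (2 * (b - 1 - c)) * X + 1) :
    (1 - C a * X ^ 2 * G)⁻¹
        * (C a * S + C (a * (b - 1 - c)) * X - C a + C (2 * c))
      = C (2 * c) :=
  spidernet_closed_form_general a b c G S hG hS0 hS
end
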